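/- arXiv:2001.05546 — 5 statements merged into one kernel-verified Lean document; each statement's English description precedes it below -/
import Mathlib

section
/- For all integers n ≥ 2 and k ≥ 0, the Gaussian binomial coefficients satisfy [n choose k]_q − (1 + q − q^n)[n−1 choose k]_q − q^(2n−2k)[n−1 choose k−1]_q + q(1 − q^(n−1))[n−2 choose k]_q = 0 as polynomials in q. -/
open LaurentPolynomial

/-- The Gaussian (q-)binomial coefficient `[n choose k]_q`, as a Laurent polynomial in `q`,
with the convention that it vanishes for `k < 0` or `k > n`.  Defined via the standard
Pascal-type recurrence `[n+1, k] = q^k [n, k] + [n, k-1]`. -/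
noncomputable def qb : ℕ → ℤ → LaurentPolynomial ℤ
  | 0, k => if k = 0 then 1 else 0
  | (n+1), k => T k * qb n k + qb n (k-1)

/-- The variable `q`. -/
noncomputable def q : LaurentPolynomial ℤ := T 1

/-- The second Pascal-type recurrence. -/
lemma qb_rec2 : ∀ (n : ℕ) (k : ℤ), qb (n+1) k = qb n k + T ((n:ℤ)+1-k) * qb n (k-1) := by
  intro n
  induction n with
  | zero =>
    intro k
    simp only [qb, Nat.cast_zero, zero_add]
    rcases eq_or_ne k 0 with rfl | h0
    · norm_num [T_zero]
    rcases eq_or_ne k 1 with rfl | h1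
    · norm_num [T_zero]
    have h0' : k - 1 ≠ 0 := by omega
    simp [h0, h0']
  | succ n ih =>
    intro k
    calc qb (n+1+1) k = T k * qb (n+1) k + qb (n+1) (k-1) := rfl
      _ = T k * (qb n k + T ((n:ℤ)+1-k) * qb n (k-1))
            + (qb n (k-1) + T ((n:ℤ)+1-(k-1)) * qb n (k-1-1)) := by
          rw [ih k, ih (k-1)]
      _ = (T k * qb n k + qb n (k-1))
            + T ((n:ℤ)+2-k) * (T (k-1) * qb n (k-1) + qb n (k-1-1)) := by
          have e1 : ((n:ℤ)+1-(k-1)) = (n:ℤ)+2-k := by ring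
          have e2 : (T k * T ((n:ℤ)+1-k) : LaurentPolynomial ℤ) = T ((n:ℤ)+2-k) * T (k-1) := by
            rw [← T_add, ← T_add]; congr 1; ring
          rw [e1]; linear_combination (qb n (k-1)) * e2
      _ = qb (n+1) k + T ((((n+1):ℕ):ℤ)+1-k) * qb (n+1) (k-1) := by
          rw [show ((((n+1):ℕ):ℤ)+1-k) = (n:ℤ)+2-k by push_cast; ring]; rfl

private lemma key {R : Type*} [CommRing R] (Q x y a b c : R)
    (h1 : (Q*x-1)*a = (y-1)*b) (h2 : (x-1)*b = (Q*y-1)*c) :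
    (Q*x*(Q*x*a+b) + (x*b+c)) - (1+Q-x*y*Q^2)*(Q*x*a+b)
      - Q^2*y^2*(x*b+c) + Q*(1-x*y*Q)*a = 0 := by
  linear_combination (Q*(x-1)+Q^2*x*y)*h1 + (1+Q*y)*h2

theorem stmt0 (n : ℕ) (hn : 2 ≤ n) (k : ℤ) (hk : 0 ≤ k) :
    qb n k - (1 + q - q ^ n) * qb (n - 1) k
      - T (2 * (n : ℤ) - 2 * k) * qb (n - 1) (k - 1)
      + q * (1 - q ^ (n - 1)) * qb (n - 2) k = 0 := by
  obtain ⟨m, rfl⟩ : ∃ m, n = m + 2 := ⟨n - 2, by omega⟩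
  have hsub1 : m + 2 - 1 = m + 1 := rfl
  have hsub2 : m + 2 - 2 = m := rfl
  rw [hsub1, hsub2]
  set x : LaurentPolynomial ℤ := T (k-1) with hx
  set y : LaurentPolynomial ℤ := T ((m:ℤ)+1-k) with hy
  set a := qb m k with ha
  set b := qb m (k-1) with hb
  set c := qb m (k-2) with hc
  have hTk : T k = q * x := by
    rw [hx, q, ← T_add]; congr 1; ring
  have hTk2 : T ((m:ℤ)+2-k) = q * y := by
    rw [hy, q, ← T_add]; congr 1; ring
  have hAB1 : qb (m+1) k = q*x*a + b := by
    show T k * qb m k + qb m (k-1) = q*x*a + b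
    rw [hTk, ← ha, ← hb]
  have hAB2 : qb (m+1) k = a + y*b := by
    rw [qb_rec2 m k, ← ha, ← hy, ← hb]
  have hBB1 : qb (m+1) (k-1) = x*b + c := by
    show T (k-1) * qb m (k-1) + qb m (k-1-1) = x*b + c
    rw [← hx, ← hb, show k-1-1 = k-2 by ring, ← hc]
  have hBB2 : qb (m+1) (k-1) = b + q*y*c := by
    rw [qb_rec2 m (k-1), ← hb, show (m:ℤ)+1-(k-1) = (m:ℤ)+2-k by ring, hTk2,
      show k-1-1 = k-2 by ring, ← hc]
  have h1 : (q*x-1)*a = (y-1)*b := by linear_combination hAB2 - hAB1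
  have h2 : (x-1)*b = (q*y-1)*c := by linear_combination hBB2 - hBB1
  have hC : qb (m+2) k = q*x*(q*x*a+b) + (x*b+c) := by
    show T k * qb (m+1) k + qb (m+1) (k-1) = _
    rw [hTk, hAB1, hBB1]
  have hqn : q ^ (m+2) = x*y*q^2 := by
    rw [q, hx, hy, T_pow, T_pow, ← T_add, ← T_add]
    congr 1; push_cast; ring
  have hqn1 : q ^ (m+1) = x*y*q := by
    rw [q, hx, hy, T_pow, ← T_add, ← T_add]
    congr 1; push_cast; ring
  have hT2 : T (2 * ((m+2:ℕ) : ℤ) - 2 * k) = q^2*y^2 := by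
    rw [q, hy, T_pow, T_pow, ← T_add]
    congr 1; push_cast; ring
  rw [hC, hAB1, hBB1, hqn, hqn1, hT2]
  exact key q x y a b c h1 h2
end

section
/- Define A_n = Σ_{k=0}^n q^{k²} [n choose k]_q. Then for all n ≥ 2, A_n − (1 + q − q^n + q^{2n−1}) A_{n−1} + q(1 − q^{n−1}) A_{n−2} = 0. -/
open LaurentPolynomial

/-- `A n = Σ_{k=0}^n q^{k²} [n choose k]_q`. -/
noncomputable def A (n : ℕ) : LaurentPolynomial ℤ :=
  ∑ k ∈ Finset.range (n + 1), q ^ (k ^ 2) * qb n k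

lemma qb_succ (n : ℕ) (k : ℤ) : qb (n+1) k = T k * qb n k + qb n (k-1) := rfl

lemma qb_neg : ∀ (n : ℕ) (k : ℤ), k < 0 → qb n k = 0
  | 0, k, hk => by simp [qb, hk.ne]
  | (n+1), k, hk => by
      rw [qb_succ, qb_neg n k hk, qb_neg n (k-1) (by omega)]; ring

lemma qb_big : ∀ (n : ℕ) (k : ℤ), (n : ℤ) < k → qb n k = 0
  | 0, k, hk => by simp [qb]; omega
  | (n+1), k, hk => by
      rw [qb_succ, qb_big n k (by push_cast at hk ⊢; omega),
        qb_big n (k-1) (by push_cast at hk ⊢; omega)]; ring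

lemma q_pow (m : ℕ) : q ^ m = T (m : ℤ) := by
  rw [q, T_pow, mul_one]

lemma qb_dual : ∀ (n : ℕ) (k : ℤ), qb (n+1) k = qb n k + T ((n : ℤ) + 1 - k) * qb n (k-1)
  | 0, k => by
      rw [qb_succ]
      rcases eq_or_ne k 0 with rfl | h0
      · simp [qb]
      rcases eq_or_ne k 1 with rfl | h1
      · simp [qb, T_zero]
      · have h1' : k - 1 ≠ 0 := by omega
        simp [qb, h0, h1, h1']
  | (n+1), k => by
      have L := qb_dual n k
      have L' := qb_dual n (k-1)
      have hc : ((n : ℤ) + 1 - (k - 1)) = ((n : ℤ) + 2 - k) := by ring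
      rw [hc] at L'
      have P : qb (n+1) k = T k * qb n k + qb n (k-1) := rfl
      have P' : qb (n+1) (k-1) = T (k-1) * qb n (k-1) + qb n (k-1-1) := rfl
      have G : qb (n+1+1) k = (T k : LaurentPolynomial ℤ) * qb (n+1) k + qb (n+1) (k-1) := rfl
      have h1 : (T k : LaurentPolynomial ℤ) * T ((n : ℤ) + 1 - k) = T ((n : ℤ) + 1) := by
        rw [← T_add]; ring_nf
      have h2 : (T ((n : ℤ) + 2 - k) : LaurentPolynomial ℤ) * T (k - 1) = T ((n : ℤ) + 1) := by
        rw [← T_add]; ring_nf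
      have hcast : ((n + 1 : ℕ) : ℤ) + 1 - k = (n : ℤ) + 2 - k := by push_cast; ring
      rw [G, hcast]
      linear_combination T k * L + L' - P - T ((n : ℤ) + 2 - k) * P'
        + qb n (k-1) * h1 - qb n (k-1) * h2

/-- `B n = Σ q^{k²+k} [n,k]`. -/
noncomputable def Bq (n : ℕ) : LaurentPolynomial ℤ :=
  ∑ k ∈ Finset.range (n + 1), q ^ (k ^ 2 + k) * qb n k

/-- `C n = Σ q^{k²+2k} [n,k]`. -/
noncomputable def Cq (n : ℕ) : LaurentPolynomial ℤ :=
  ∑ k ∈ Finset.range (n + 1), q ^ (k ^ 2 + 2*k) * qb n k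

lemma relAB (n : ℕ) : A (n+1) = A n + q ^ (n+1) * Bq n := by
  have hb : qb n ((n+1 : ℕ) : ℤ) = 0 := qb_big n _ (by push_cast; omega)
  have : A (n+1) = (∑ k ∈ Finset.range (n + 2), q ^ (k ^ 2) * qb n k)
      + ∑ k ∈ Finset.range (n + 2), q ^ (k ^ 2) * (T ((n : ℤ) + 1 - k) * qb n ((k : ℤ) - 1)) := by
    rw [A, ← Finset.sum_add_distrib]
    refine Finset.sum_congr rfl fun k _ => ?_
    rw [qb_dual]; ring
  rw [this]
  congr 1
  · rw [Finset.sum_range_succ, hb, mul_zero, add_zero, A]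
  · rw [Finset.sum_range_succ', Bq, Finset.mul_sum]
    have h0 : qb n (((0:ℕ) : ℤ) - 1) = 0 := qb_neg n _ (by norm_num)
    rw [h0, mul_zero, mul_zero, add_zero]
    refine Finset.sum_congr rfl fun j _ => ?_
    have hj : ((j + 1 : ℕ) : ℤ) - 1 = (j : ℤ) := by push_cast; ring
    rw [hj, q_pow, q_pow, q_pow, ← mul_assoc, ← mul_assoc, ← T_add, ← T_add]
    congr 2 <;> push_cast <;> ring

lemma relAC (n : ℕ) : A (n+1) = Bq n + q * Cq n := by
  have hb : qb n ((n+1 : ℕ) : ℤ) = 0 := qb_big n _ (by push_cast; omega)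
  have : A (n+1) = (∑ k ∈ Finset.range (n + 2), q ^ (k ^ 2) * (T (k:ℤ) * qb n k))
      + ∑ k ∈ Finset.range (n + 2), q ^ (k ^ 2) * qb n ((k : ℤ) - 1) := by
    rw [A, ← Finset.sum_add_distrib]
    refine Finset.sum_congr rfl fun k _ => ?_
    rw [qb_succ]; ring
  rw [this]
  congr 1
  · rw [Finset.sum_range_succ, hb, mul_zero, mul_zero, add_zero, Bq]
    refine Finset.sum_congr rfl fun k _ => ?_
    rw [q_pow, q_pow, ← mul_assoc, ← T_add]
    congr 2 <;> push_cast <;> ring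
  · rw [Finset.sum_range_succ', Cq, Finset.mul_sum]
    have h0 : qb n (((0:ℕ) : ℤ) - 1) = 0 := qb_neg n _ (by norm_num)
    rw [h0, mul_zero, add_zero]
    refine Finset.sum_congr rfl fun j _ => ?_
    have hj : ((j + 1 : ℕ) : ℤ) - 1 = (j : ℤ) := by push_cast; ring
    rw [hj, q_pow, q_pow, q, ← mul_assoc, ← T_add]
    congr 2 <;> push_cast <;> ring

lemma relBC (n : ℕ) : Bq (n+1) = Bq n + q ^ (n+2) * Cq n := by
  have hb : qb n ((n+1 : ℕ) : ℤ) = 0 := qb_big n _ (by push_cast; omega)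
  have : Bq (n+1) = (∑ k ∈ Finset.range (n + 2), q ^ (k ^ 2 + k) * qb n k)
      + ∑ k ∈ Finset.range (n + 2), q ^ (k ^ 2 + k) * (T ((n : ℤ) + 1 - k) * qb n ((k : ℤ) - 1)) := by
    rw [Bq, ← Finset.sum_add_distrib]
    refine Finset.sum_congr rfl fun k _ => ?_
    rw [qb_dual]; ring
  rw [this]
  congr 1
  · rw [Finset.sum_range_succ, hb, mul_zero, add_zero, Bq]
  · rw [Finset.sum_range_succ', Cq, Finset.mul_sum]
    have h0 : qb n (((0:ℕ) : ℤ) - 1) = 0 := qb_neg n _ (by norm_num)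
    rw [h0, mul_zero, mul_zero, add_zero]
    refine Finset.sum_congr rfl fun j _ => ?_
    have hj : ((j + 1 : ℕ) : ℤ) - 1 = (j : ℤ) := by push_cast; ring
    rw [hj, q_pow, q_pow, q_pow, ← mul_assoc, ← mul_assoc, ← T_add, ← T_add]
    congr 2 <;> push_cast <;> ring

theorem stmt1 (n : ℕ) (hn : 2 ≤ n) :
    A n - (1 + q - q ^ n + q ^ (2 * n - 1)) * A (n - 1)
      + q * (1 - q ^ (n - 1)) * A (n - 2) = 0 := by
  obtain ⟨m, rfl⟩ : ∃ m, n = m + 2 := ⟨n - 2, by omega⟩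
  have hs1 : m + 2 - 1 = m + 1 := rfl
  have hs2 : m + 2 - 2 = m := rfl
  have hs3 : 2 * (m + 2) - 1 = 2*m + 3 := by omega
  rw [hs1, hs2, hs3]
  have e1 := relAB (m+1)
  have e2 := relAB m
  have e3 := relAC m
  have e4 := relBC m
  linear_combination e1 + q^(m+2) * e4 - q^(2*m+3) * e3 + (q^(m+2) - q) * e2
end

section
/- For all n ≥ 0 and k ≥ 1, [n+2 choose 2k]_q − (1+q)[n+1 choose 2k]_q + q[n choose 2k]_q − q^{2n+4−4k}[n choose 2k−2]_q = 0. -/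
open LaurentPolynomial

lemma Tmul (a b : ℤ) : (T a : LaurentPolynomial ℤ) * T b = T (a + b) := (T_add a b).symm

lemma pascal' : ∀ (n : ℕ) (k : ℤ),
    qb (n + 1) k = qb n k + T ((n : ℤ) + 1 - k) * qb n (k - 1) := by
  intro n
  induction n with
  | zero =>
    intro k
    show T k * qb 0 k + qb 0 (k-1) = qb 0 k + T (0 + 1 - k) * qb 0 (k - 1)
    rcases eq_or_ne k 0 with h | h
    · subst h; simp [qb]
    rcases eq_or_ne k 1 with h1 | h1
    · subst h1; simp [qb]
    · simp [qb, h, h1, sub_eq_zero]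
  | succ n ih =>
    intro k
    show T k * qb (n + 1) k + qb (n + 1) (k - 1)
        = (T k * qb n k + qb n (k - 1))
          + T ((((n : ℕ) + 1 : ℕ) : ℤ) + 1 - k) * (T (k - 1) * qb n (k - 1) + qb n (k - 1 - 1))
    rw [ih k, ih (k - 1)]
    push_cast
    have e1 : (T k : LaurentPolynomial ℤ) * T ((n : ℤ) + 1 - k) = T ((n : ℤ) + 1) := by
      rw [Tmul]; ring_nf
    have e2 : (T ((n : ℤ) + 1 + 1 - k) : LaurentPolynomial ℤ) * T (k - 1) = T ((n : ℤ) + 1) := by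
      rw [Tmul]; ring_nf
    have e3 : (n : ℤ) + 1 - (k - 1) = (n : ℤ) + 1 + 1 - k := by ring
    rw [e3]
    linear_combination qb n (k - 1) * e1 - qb n (k - 1) * e2

theorem stmt13 (n : ℕ) (k : ℤ) (hk : 1 ≤ k) :
    qb (n + 2) (2 * k) - (1 + q) * qb (n + 1) (2 * k) + q * qb n (2 * k)
      - T (2 * (n : ℤ) + 4 - 4 * k) * qb n (2 * k - 2) = 0 := by
  have h1 := pascal' (n + 1) (2 * k)
  have h2 := pascal' n (2 * k)
  have h3 := pascal' n (2 * k - 1)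
  push_cast at h1
  have e1 : (n : ℤ) + 1 + 1 - 2 * k = (n : ℤ) + 2 - 2 * k := by ring
  rw [e1] at h1
  have e2 : (n : ℤ) + 1 - (2 * k - 1) = (n : ℤ) + 2 - 2 * k := by ring
  have e3 : 2 * k - 1 - 1 = 2 * k - 2 := by ring
  rw [e2, e3] at h3
  rw [h1, h3, h2]
  have f1 : (T ((n : ℤ) + 2 - 2 * k) : LaurentPolynomial ℤ) * T ((n : ℤ) + 2 - 2 * k)
      = T (2 * (n : ℤ) + 4 - 4 * k) := by rw [Tmul]; ring_nf
  have f2 : (q : LaurentPolynomial ℤ) * T ((n : ℤ) + 1 - 2 * k) = T ((n : ℤ) + 2 - 2 * k) := by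
    rw [q, Tmul]; ring_nf
  linear_combination qb n (2 * k - 2) * f1 - qb n (2 * k - 1) * f2
end

section
/- Define S̄_n = Σ_{j∈ℤ} q^{4j²−j} [n choose ⌊(n+1)/2⌋ − 2j]_q. Then for all n ≥ 0, S̄_{n+2} − (1+q) S̄_{n+1} + (q − q^{2n+2}) S̄_n = 0. -/
/-!
Alongside `S̄ₙ` consider the companion sum `T̄ₙ = Σⱼ q^(4j²-3j) [n, ⌊n/2⌋ + 1 - 2j]`.
Expanding the binomials of `S̄ₙ₊₁` and `T̄ₙ₊₁` by one of the two `q²`-Pascal rules (which one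
depends on the parity of `n`) and reflecting the summation index `j ↦ t - j` in one of the two
resulting sums with `[n, k] = [n, n - k]` gives the coupled recurrences
`S̄ₙ₊₁ = S̄ₙ + q^(n+1) T̄ₙ` and `T̄ₙ₊₁ = T̄ₙ + qⁿ S̄ₙ`. Eliminating `T̄` gives the theorem.
-/

open LaurentPolynomial

/-- The Gaussian binomial coefficient in base `q²` (the paper's `\gaa`), i.e. the
Gaussian binomial coefficient with `q` replaced by `q²`, vanishing for `k < 0` or `k > n`. -/
noncomputable def qb2 : ℕ → ℤ → LaurentPolynomial ℤ
  | 0, k => if k = 0 then 1 else 0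
  | (n+1), k => T (2 * k) * qb2 n k + qb2 n (k-1)

/-- `S̄ n = Σ_{j∈ℤ} q^{4j²−j} [n choose ⌊(n+1)/2⌋ − 2j]`, where the binomial is the paper's
`\gaa`, the Gaussian binomial coefficient in base `q²`. -/
noncomputable def Sbar (n : ℕ) : LaurentPolynomial ℤ :=
  ∑ᶠ j : ℤ, T (4 * j ^ 2 - j) * qb2 n ((((n : ℤ) + 1) / 2) - 2 * j)

lemma qb2_zero (k : ℤ) : qb2 0 k = if k = 0 then 1 else 0 := by
  rw [qb2]

lemma qb2_succ (n : ℕ) (k : ℤ) : qb2 (n + 1) k = T (2 * k) * qb2 n k + qb2 n (k - 1) := by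
  rw [qb2]

lemma qb2_eq_zero {n : ℕ} {k : ℤ} (h : k < 0 ∨ (n : ℤ) < k) : qb2 n k = 0 := by
  induction n generalizing k with
  | zero => rw [qb2_zero, if_neg (by omega)]
  | succ n ih => rw [qb2_succ, ih (by omega), ih (by omega), mul_zero, add_zero]

lemma qb2_succ' (n : ℕ) (k : ℤ) :
    qb2 (n + 1) k = qb2 n k + T (2 * ((n : ℤ) + 1 - k)) * qb2 n (k - 1) := by
  induction n generalizing k with
  | zero =>
    rw [qb2_succ, qb2_zero, qb2_zero]
    by_cases h0 : k = 0
    · simp [h0]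
    by_cases h1 : k = 1
    · simp [h1]
    · rw [if_neg h0, if_neg (by omega)]; ring
  | succ n ih =>
    have hk : T (2 * (k - 1)) * qb2 n (k - 1) + qb2 n (k - 1 - 1)
        = qb2 n (k - 1) + T (2 * ((n : ℤ) + 1 - (k - 1))) * qb2 n (k - 1 - 1) :=
      (qb2_succ n (k - 1)).symm.trans (ih (k - 1))
    have hT : (T (2 * k) : LaurentPolynomial ℤ) * T (2 * ((n : ℤ) + 1 - k))
        = T (2 * (((n + 1 : ℕ) : ℤ) + 1 - k)) * T (2 * (k - 1)) := by
      rw [← T_add, ← T_add]; congr 1; push_cast; ring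
    rw [show 2 * ((n : ℤ) + 1 - (k - 1)) = 2 * (((n + 1 : ℕ) : ℤ) + 1 - k) by push_cast; ring]
      at hk
    conv_lhs => rw [qb2_succ (n + 1) k, ih k, qb2_succ n (k - 1)]
    conv_rhs => rw [qb2_succ n k, qb2_succ n (k - 1)]
    linear_combination hk + qb2 n (k - 1) * hT

lemma qb2_symm (n : ℕ) (k : ℤ) : qb2 n ((n : ℤ) - k) = qb2 n k := by
  induction n generalizing k with
  | zero => simp only [qb2_zero]; congr 1; simp
  | succ n ih =>
    rw [qb2_succ', qb2_succ, show ((n + 1 : ℕ) : ℤ) - k = n - (k - 1) by push_cast; ring, ih,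
      show (n : ℤ) - (k - 1) - 1 = n - k by ring, ih, show (n : ℤ) + 1 - (n - (k - 1)) = k by ring]
    ring

lemma finite_support_of_qb2_eq_zero_imp (n : ℕ) (c : ℤ) {f : ℤ → LaurentPolynomial ℤ}
    (hf : ∀ j : ℤ, qb2 n (c - 2 * j) = 0 → f j = 0) : (Function.support f).Finite := by
  refine (Set.finite_Icc ((c - n) / 2) (c / 2)).subset fun j hj => ?_
  by_contra hj'
  rw [Set.mem_Icc] at hj'
  exact hj (hf j (qb2_eq_zero (by omega)))

noncomputable def thetaSum (n : ℕ) (a c : ℤ) : LaurentPolynomial ℤ :=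
  ∑ᶠ j : ℤ, T (4 * j ^ 2 + a * j) * qb2 n (c - 2 * j)

lemma thetaSum_succ (n : ℕ) (a c : ℤ) :
    thetaSum (n + 1) a c = T (2 * c) * thetaSum n (a - 4) c + thetaSum n a (c - 1) := by
  unfold thetaSum
  rw [mul_finsum' _ _ (finite_support_of_qb2_eq_zero_imp n c fun j hj => by simp [hj]),
    ← finsum_add_distrib (finite_support_of_qb2_eq_zero_imp n c fun j hj => by simp [hj])
      (finite_support_of_qb2_eq_zero_imp n (c - 1) fun j hj => by simp [hj])]
  refine finsum_congr fun j => ?_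
  rw [qb2_succ, mul_add, ← mul_assoc, ← mul_assoc, ← T_add, ← T_add, sub_right_comm]
  ring_nf

lemma thetaSum_succ' (n : ℕ) (a c : ℤ) :
    thetaSum (n + 1) a c
      = thetaSum n a c + T (2 * ((n : ℤ) + 1 - c)) * thetaSum n (a + 4) (c - 1) := by
  unfold thetaSum
  rw [mul_finsum' _ _ (finite_support_of_qb2_eq_zero_imp n (c - 1) fun j hj => by simp [hj]),
    ← finsum_add_distrib (finite_support_of_qb2_eq_zero_imp n c fun j hj => by simp [hj])
      (finite_support_of_qb2_eq_zero_imp n (c - 1) fun j hj => by simp [hj])]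
  refine finsum_congr fun j => ?_
  rw [qb2_succ', mul_add, ← mul_assoc, ← mul_assoc, ← T_add, ← T_add, sub_right_comm]
  ring_nf

-- The parameters are passed as equations so that the lemma rewrites at concrete values.
lemma thetaSum_reflect (n : ℕ) (a c t : ℤ) {b d e : ℤ} (hb : b = -(8 * t + a))
    (hd : d = n - c + 2 * t) (he : e = 4 * t ^ 2 + a * t) :
    thetaSum n a c = T e * thetaSum n b d := by
  unfold thetaSum
  rw [mul_finsum' _ _ (finite_support_of_qb2_eq_zero_imp n d fun j hj => by simp [hj]),
    ← finsum_comp_equiv (Equiv.subLeft t)]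
  refine finsum_congr fun j => ?_
  rw [Equiv.subLeft_apply, ← qb2_symm n (c - 2 * (t - j)), ← mul_assoc, ← T_add, hb, hd, he]
  ring_nf

lemma Sbar_eq_thetaSum (n : ℕ) : Sbar n = thetaSum n (-1) (((n : ℤ) + 1) / 2) :=
  finsum_congr fun j => by rw [neg_one_mul, ← sub_eq_add_neg]

noncomputable def Tbar (n : ℕ) : LaurentPolynomial ℤ := thetaSum n (-3) ((n : ℤ) / 2 + 1)

lemma Sbar_succ (n : ℕ) : Sbar (n + 1) = Sbar n + T ((n : ℤ) + 1) * Tbar n := by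
  obtain ⟨m, rfl | rfl⟩ := Nat.even_or_odd' n
  · rw [Sbar_eq_thetaSum, Sbar_eq_thetaSum, Tbar,
      show (((2 * m + 1 : ℕ) : ℤ) + 1) / 2 = m + 1 by omega,
      show (((2 * m : ℕ) : ℤ) + 1) / 2 = m by omega,
      show ((2 * m : ℕ) : ℤ) / 2 + 1 = m + 1 by omega,
      thetaSum_succ, thetaSum_reflect (2 * m) (-1 - 4) (m + 1) 1 (b := -3) (d := m + 1) (e := -1)
        (by ring) (by push_cast; ring) (by ring),
      add_sub_cancel_right, ← mul_assoc, ← T_add]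
    push_cast
    ring_nf
  · rw [Sbar_eq_thetaSum, Sbar_eq_thetaSum, Tbar,
      show (((2 * m + 1 + 1 : ℕ) : ℤ) + 1) / 2 = m + 1 by omega,
      show (((2 * m + 1 : ℕ) : ℤ) + 1) / 2 = m + 1 by omega,
      show ((2 * m + 1 : ℕ) : ℤ) / 2 + 1 = m + 1 by omega,
      thetaSum_succ', thetaSum_reflect (2 * m + 1) (-1 + 4) (m + 1 - 1) 0 (b := -3) (d := m + 1) (e := 0)
        (by ring) (by push_cast; ring) (by ring), T_zero, one_mul]
    push_cast
    ring_nf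

lemma Tbar_succ (n : ℕ) : Tbar (n + 1) = Tbar n + T (n : ℤ) * Sbar n := by
  obtain ⟨m, rfl | rfl⟩ := Nat.even_or_odd' n
  · rw [Sbar_eq_thetaSum, Tbar, Tbar,
      show ((2 * m + 1 : ℕ) : ℤ) / 2 + 1 = m + 1 by omega,
      show ((2 * m : ℕ) : ℤ) / 2 + 1 = m + 1 by omega,
      show (((2 * m : ℕ) : ℤ) + 1) / 2 = m by omega,
      thetaSum_succ', thetaSum_reflect (2 * m) (-3 + 4) (m + 1 - 1) 0 (b := -1) (d := m) (e := 0)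
        (by ring) (by push_cast; ring) (by ring), T_zero, one_mul]
    push_cast
    ring_nf
  · rw [Sbar_eq_thetaSum, Tbar, Tbar,
      show ((2 * m + 1 + 1 : ℕ) : ℤ) / 2 + 1 = m + 2 by omega,
      show ((2 * m + 1 : ℕ) : ℤ) / 2 + 1 = m + 1 by omega,
      show (((2 * m + 1 : ℕ) : ℤ) + 1) / 2 = m + 1 by omega,
      thetaSum_succ, thetaSum_reflect (2 * m + 1) (-3 - 4) (m + 2) 1 (b := -1) (d := m + 1) (e := -3)
        (by ring) (by push_cast; ring) (by ring), ← mul_assoc, ← T_add]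
    push_cast
    ring_nf

theorem stmt15 (n : ℕ) :
    Sbar (n + 2) - (1 + q) * Sbar (n + 1) + (q - q ^ (2 * n + 2)) * Sbar n = 0 := by
  have hS₁ := Sbar_succ (n + 1)
  have hS₀ := Sbar_succ n
  rw [Tbar_succ] at hS₁
  have hq : q ^ (2 * n + 2) = T ((n + 1 : ℕ) + 1 : ℤ) * T n := by
    rw [q, T_pow, ← T_add]; push_cast; ring_nf
  have hT : (T ((n + 1 : ℕ) + 1 : ℤ) : LaurentPolynomial ℤ) = q * T (n + 1) := by
    rw [q, ← T_add]; push_cast; ring_nf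
  rw [hq]
  linear_combination hS₁ - q * hS₀ + Tbar n * hT
end

section
/- Define g(n,k) = Σ_{j∈ℤ} q^{2j²−j} [⌈n/2⌉ choose k+j]_q [⌊n/2⌋ choose k−j]_q. Then g(n,k) = [n choose 2k]_q for all n ≥ 0 and all k. -/
open LaurentPolynomial

/-- `g n k = Σ_{j∈ℤ} q^{2j²−j} [⌈n/2⌉ choose k+j] [⌊n/2⌋ choose k−j]`, binomials in base `q²`. -/
noncomputable def g (n : ℕ) (k : ℤ) : LaurentPolynomial ℤ :=
  ∑ᶠ j : ℤ, T (2 * j ^ 2 - j) * qb2 ((n + 1) / 2) (k + j) * qb2 (n / 2) (k - j)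

/-!
Put `S(a, b, r) = Σ_i q^{C(2i-r, 2)} [a, i]_{q²} [b, r-i]_{q²}` (`bisectSum`) for `r ∈ ℤ`;
substituting `i = k + j` shows `g(n, k) = S(⌈n/2⌉, ⌊n/2⌋, 2k)`.  Expanding one q²-binomial factor
by Pascal's rule (after the reflection `i ↦ r - i` in the first case) gives
`S(m+1, m, r) = q^r S(m, m, r) + S(m, m, r-1)` and
`S(m+1, m+1, r) = S(m+1, m, r) + q^{2m+2-r} S(m+1, m, r-1)`,
which are the two Pascal recurrences of `[n, r]_q` for `n = 2m` and `n = 2m+1`.  Hence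
`S(⌈n/2⌉, ⌊n/2⌋, r) = [n, r]_q` for every `r`, by induction on `n`.
-/

def choose2 (d : ℤ) : ℤ := d * (d - 1) / 2

lemma choose2_add_one (d : ℤ) : choose2 (d + 1) = choose2 d + d := by
  rw [choose2, choose2, show (d + 1) * (d + 1 - 1) = d * (d - 1) + d * 2 by ring,
    Int.add_mul_ediv_right _ _ two_ne_zero]

lemma choose2_neg (d : ℤ) : choose2 (-d) = choose2 (d + 1) := by
  rw [choose2, choose2]; congr 1; ring

lemma choose2_two_mul (j : ℤ) : choose2 (2 * j) = 2 * j ^ 2 - j := by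
  rw [choose2, show 2 * j * (2 * j - 1) = 2 * (2 * j ^ 2 - j) by ring,
    Int.mul_ediv_cancel_left _ two_ne_zero]

lemma finsum_eq_mul_finsum_add_finsum {α R : Type*} [Semiring R] {f u v : α → R} (c : R)
    (hu : u.support.Finite) (hv : v.support.Finite) (h : ∀ i, f i = c * u i + v i) :
    ∑ᶠ i, f i = c * ∑ᶠ i, u i + ∑ᶠ i, v i := by
  rw [finsum_congr h, finsum_add_distrib (hu.subset (Function.support_mul_subset_right _ _)) hv,
    mul_finsum' _ _ hu]

/-- The Gaussian binomial coefficient `[n, k]` in base `q ^ s`. -/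
noncomputable def qBinom (s : ℤ) : ℕ → ℤ → LaurentPolynomial ℤ
  | 0, k => if k = 0 then 1 else 0
  | n + 1, k => T (s * k) * qBinom s n k + qBinom s n (k - 1)

lemma qb_eq_qBinom : qb = qBinom 1 := by
  funext n k
  induction n generalizing k with
  | zero => rfl
  | succ n ih => rw [qb, qBinom, ih, ih, one_mul]

lemma qb2_eq_qBinom : qb2 = qBinom 2 := by
  funext n k
  induction n generalizing k with
  | zero => rfl
  | succ n ih => rw [qb2, qBinom, ih, ih]

namespace qBinom

variable (s : ℤ)

lemma succ (n : ℕ) (k : ℤ) :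
    qBinom s (n + 1) k = T (s * k) * qBinom s n k + qBinom s n (k - 1) := rfl

lemma zero_right (k : ℤ) (h : k ≠ 0) : qBinom s 0 k = 0 := if_neg h

lemma eq_zero_of_notMem_Icc (n : ℕ) {k : ℤ} (hk : k ∉ Set.Icc 0 (n : ℤ)) : qBinom s n k = 0 := by
  induction n generalizing k with
  | zero => exact zero_right s k (by simpa using hk)
  | succ n ih =>
    simp only [Set.mem_Icc, not_and_or, not_le, Nat.cast_succ] at hk
    rw [succ, ih (by simp only [Set.mem_Icc]; omega), ih (by simp only [Set.mem_Icc]; omega),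
      mul_zero, add_zero]

lemma support_finite (n : ℕ) : (qBinom s n).support.Finite :=
  (Set.finite_Icc 0 (n : ℤ)).subset fun _ hk =>
    by_contra fun h => hk (eq_zero_of_notMem_Icc s n h)

lemma succ_symm (n : ℕ) (k : ℤ) :
    qBinom s (n + 1) k = qBinom s n k + T (s * (n + 1 - k)) * qBinom s n (k - 1) := by
  induction n generalizing k with
  | zero =>
    simp only [qBinom, CharP.cast_eq_zero, zero_add]
    rcases eq_or_ne k 0 with rfl | h0
    · simp
    rcases eq_or_ne k 1 with rfl | h1
    · simp
    simp [h0, sub_ne_zero.mpr h1]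
  | succ n ih =>
    have h₁ : T (R := ℤ) (s * k) * T (s * (n + 1 - k)) = T (s * (n + 1)) := by
      rw [← T_add]; ring_nf
    have h₂ : T (R := ℤ) (s * (↑(n + 1) + 1 - k)) * T (s * (k - 1)) = T (s * (n + 1)) := by
      rw [← T_add]; push_cast; ring_nf
    conv_lhs => rw [succ, ih k, ih (k - 1),
      show (n : ℤ) + 1 - (k - 1) = ↑(n + 1) + 1 - k by push_cast; ring]
    conv_rhs => rw [succ s n k, succ s n (k - 1)]
    linear_combination qBinom s n (k - 1) * (h₁ - h₂)

end qBinom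

noncomputable def bisectTerm (a b : ℕ) (r i : ℤ) : LaurentPolynomial ℤ :=
  T (choose2 (2 * i - r)) * qBinom 2 a i * qBinom 2 b (r - i)

noncomputable def bisectSum (a b : ℕ) (r : ℤ) : LaurentPolynomial ℤ :=
  ∑ᶠ i, bisectTerm a b r i

lemma bisectTerm_support_finite (a b : ℕ) (r : ℤ) : (bisectTerm a b r).support.Finite :=
  (qBinom.support_finite 2 a).subset fun i hi h => hi (by rw [bisectTerm, h, mul_zero, zero_mul])

lemma g_eq_bisectSum (n : ℕ) (k : ℤ) : g n k = bisectSum ((n + 1) / 2) (n / 2) (2 * k) := by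
  rw [g, bisectSum, ← finsum_comp_equiv (Equiv.addLeft k) (f := bisectTerm _ _ _), qb2_eq_qBinom]
  refine finsum_congr fun j => ?_
  rw [Equiv.coe_addLeft, bisectTerm, show 2 * (k + j) - 2 * k = 2 * j by ring, choose2_two_mul,
    show 2 * k - (k + j) = k - j by ring]

lemma bisectSum_zero (r : ℤ) : bisectSum 0 0 r = qBinom 1 0 r := by
  rw [bisectSum, finsum_eq_single _ 0 fun i hi => by rw [bisectTerm, qBinom.zero_right 2 i hi,
    mul_zero, zero_mul], bisectTerm, qBinom, if_pos rfl, mul_one]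
  rcases eq_or_ne r 0 with rfl | hr
  · simp [choose2, qBinom]
  · rw [qBinom.zero_right 2 _ (by omega), qBinom.zero_right 1 r hr, mul_zero]

lemma bisectSum_succ_left (m : ℕ) (r : ℤ) :
    bisectSum (m + 1) m r = T r * bisectSum m m r + bisectSum m m (r - 1) := by
  rw [bisectSum, ← finsum_comp_equiv (Equiv.subLeft r)]
  refine finsum_eq_mul_finsum_add_finsum _ (bisectTerm_support_finite _ _ _)
    (bisectTerm_support_finite _ _ _) fun i => ?_
  have hneg : choose2 (2 * (r - i) - r) = choose2 (2 * i - r + 1) := by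
    rw [← choose2_neg]; congr 1; ring
  have hT : T (R := ℤ) (choose2 (2 * i - r + 1)) * T (2 * (r - i))
      = T r * T (choose2 (2 * i - r)) := by
    rw [← T_add, ← T_add, choose2_add_one]; congr 1; ring
  simp only [Equiv.subLeft_apply, bisectTerm, qBinom.succ]
  rw [hneg, show 2 * i - (r - 1) = 2 * i - r + 1 by ring, show r - (r - i) = i by ring,
    show r - i - 1 = r - 1 - i by ring]
  linear_combination qBinom 2 m (r - i) * qBinom 2 m i * hT

lemma bisectSum_succ_succ (m : ℕ) (r : ℤ) :
    bisectSum (m + 1) (m + 1) r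
      = T (2 * m + 2 - r) * bisectSum (m + 1) m (r - 1) + bisectSum (m + 1) m r := by
  refine finsum_eq_mul_finsum_add_finsum _ (bisectTerm_support_finite _ _ _)
    (bisectTerm_support_finite _ _ _) fun i => ?_
  have hT : T (R := ℤ) (choose2 (2 * i - r)) * T (2 * (m + 1 - (r - i)))
      = T (2 * m + 2 - r) * T (choose2 (2 * i - (r - 1))) := by
    rw [← T_add, ← T_add, show 2 * i - (r - 1) = 2 * i - r + 1 by ring, choose2_add_one]
    congr 1; ring
  simp only [bisectTerm]
  rw [qBinom.succ_symm 2 m (r - i), show r - i - 1 = r - 1 - i by ring]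
  linear_combination qBinom 2 (m + 1) i * qBinom 2 m (r - 1 - i) * hT

lemma bisectSum_succ_self_of_self (m : ℕ) (h : ∀ r, bisectSum m m r = qBinom 1 (2 * m) r)
    (r : ℤ) : bisectSum (m + 1) m r = qBinom 1 (2 * m + 1) r := by
  rw [bisectSum_succ_left, h, h, qBinom.succ, one_mul]

lemma bisectSum_self (m : ℕ) (r : ℤ) : bisectSum m m r = qBinom 1 (2 * m) r := by
  induction m generalizing r with
  | zero => exact bisectSum_zero r
  | succ m ih =>
    rw [bisectSum_succ_succ, bisectSum_succ_self_of_self m ih, bisectSum_succ_self_of_self m ih,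
      show 2 * (m + 1) = 2 * m + 1 + 1 by ring, qBinom.succ_symm 1 (2 * m + 1) r, add_comm]
    congr 3; push_cast; ring

lemma bisectSum_half (n : ℕ) (r : ℤ) : bisectSum ((n + 1) / 2) (n / 2) r = qBinom 1 n r := by
  obtain ⟨m, rfl | rfl⟩ := Nat.even_or_odd' n
  · rw [show (2 * m + 1) / 2 = m by omega, show 2 * m / 2 = m by omega, bisectSum_self]
  · rw [show (2 * m + 1 + 1) / 2 = m + 1 by omega, show (2 * m + 1) / 2 = m by omega,
      bisectSum_succ_self_of_self m (bisectSum_self m)]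

theorem stmt17 (n : ℕ) (k : ℤ) : g n k = qb n (2 * k) := by
  rw [g_eq_bisectSum, bisectSum_half, qb_eq_qBinom]
end
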